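/- Consider the 'epoch' Markov chain on ℕ = {0,1,2,…} with transition probabilities P(x,x) = θ_x and P(x,0) = 1 − θ_x for x ≥ 1, and P(0,y) = ζ_y for y ∈ ℕ, where θ_x = 1 − κ(x+1)^{−λ} with 0 < κ ≤ 1 and λ > 0, and (ζ_y)_{y∈ℕ} is a probability distribution on ℕ. Suppose there exists ε > 0 such that Σ_y ζ_y·(y+1)^{(1+ε)λ} < ∞. Set m = (1+ε)λ, V(x) = (x+1)^m and α = ε/(1+ε). Then for every c ∈ (0, κ) there exist b < ∞ and x₀ ∈ ℕ such that Σ_y P(x,y)·V(y) ≤ V(x) − c·V(x)^α + b·1_{[x ≤ x₀]} for all x ∈ ℕ. -/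

import Mathlib

open Real Filter

/-!
From a state `x ≥ 1` the chain either stays put or jumps to `0`, where `V = 1`; with
`X = x + 1`, `m = (1 + ε)λ` and `θ_x = 1 - κ X^{-λ}` this gives exactly
`PV(x) - V(x) + c V(x)^α = κ X^{-λ} - (κ - c) X^{ελ}`, which is eventually negative because
`X^{ελ} → ∞` while `X^{-λ} ≤ 1`. The finitely many remaining states are absorbed into `b`.
-/

theorem exists_le_ite_of_eventually_nonpos {g : ℕ → ℝ} (h : ∀ᶠ x in atTop, g x ≤ 0) :
    ∃ b : ℝ, ∃ x₀ : ℕ, ∀ x : ℕ, g x ≤ if x ≤ x₀ then b else 0 := by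
  obtain ⟨x₀, hx₀⟩ := eventually_atTop.1 h
  obtain ⟨b, hb⟩ := ((Set.finite_Iic x₀).image g).bddAbove
  refine ⟨b, x₀, fun x => ?_⟩
  split_ifs with hx
  · exact hb ⟨x, hx, rfl⟩
  · exact hx₀ x (by omega)

theorem tsum_mul_eq_of_support_subset_pair {p f : ℕ → ℝ} {x : ℕ} (hx : x ≠ 0)
    (hp : ∀ y, y ≠ x → y ≠ 0 → p y = 0) :
    ∑' y, p y * f y = p 0 * f 0 + p x * f x := by
  rw [tsum_eq_sum (s := {0, x}), Finset.sum_pair hx.symm]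
  intro y hy
  simp only [Finset.mem_insert, Finset.mem_singleton, not_or] at hy
  rw [hp y hy.2 hy.1, zero_mul]

theorem rpow_neg_mul_rpow_one_add_mul {X : ℝ} (hX : 0 < X) (lam ε : ℝ) :
    X ^ (-lam) * X ^ ((1 + ε) * lam) = X ^ (ε * lam) := by
  rw [← rpow_add hX]
  ring_nf

theorem rpow_one_add_mul_rpow_div {X : ℝ} (hX : 0 ≤ X) (lam : ℝ) {ε : ℝ} (hε : 1 + ε ≠ 0) :
    (X ^ ((1 + ε) * lam)) ^ (ε / (1 + ε)) = X ^ (ε * lam) := by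
  rw [← rpow_mul hX]
  congr 1
  field_simp

theorem eventually_mul_rpow_neg_le_mul_rpow {κ c lam e : ℝ} (hκ : 0 < κ) (hcκ : c < κ)
    (hlam : 0 < lam) (he : 0 < e) :
    ∀ᶠ x : ℕ in atTop, κ * ((x : ℝ) + 1) ^ (-lam) ≤ (κ - c) * ((x : ℝ) + 1) ^ e := by
  have hgrow : Tendsto (fun x : ℕ => (κ - c) * ((x : ℝ) + 1) ^ e) atTop atTop :=
    ((tendsto_rpow_atTop he).comp
      (tendsto_atTop_add_const_right _ 1 tendsto_natCast_atTop_atTop)).const_mul_atTop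
      (sub_pos.2 hcκ)
  filter_upwards [hgrow.eventually_ge_atTop κ] with x hx
  have hdecay : ((x : ℝ) + 1) ^ (-lam) ≤ 1 :=
    rpow_le_one_of_one_le_of_nonpos (by linarith [x.cast_nonneg (α := ℝ)]) (by linarith)
  nlinarith

theorem stmt_13 (κ lam ε : ℝ) (hκ : 0 < κ) (hlam : 0 < lam) (hε : 0 < ε)
    (θ : ℕ → ℝ) (hθ : ∀ x : ℕ, θ x = 1 - κ * ((x : ℝ) + 1) ^ (-lam))
    (P : ℕ → ℕ → ℝ)
    (hPxx : ∀ x : ℕ, 1 ≤ x → P x x = θ x)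
    (hPx0 : ∀ x : ℕ, 1 ≤ x → P x 0 = 1 - θ x)
    (hPoff : ∀ x : ℕ, 1 ≤ x → ∀ y : ℕ, y ≠ x → y ≠ 0 → P x y = 0) :
    ∀ c : ℝ, 0 < c → c < κ → ∃ b : ℝ, ∃ x₀ : ℕ, ∀ x : ℕ,
      (∑' y : ℕ, P x y * ((y : ℝ) + 1) ^ ((1 + ε) * lam))
        ≤ ((x : ℝ) + 1) ^ ((1 + ε) * lam)
          - c * (((x : ℝ) + 1) ^ ((1 + ε) * lam)) ^ (ε / (1 + ε))
          + (if x ≤ x₀ then b else 0) := by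
  intro c _ hcκ
  set V : ℕ → ℝ := fun x => ((x : ℝ) + 1) ^ ((1 + ε) * lam)
  suffices hdrift : ∀ᶠ x in atTop,
      ∑' y, P x y * V y - V x + c * V x ^ (ε / (1 + ε)) ≤ 0 by
    obtain ⟨b, x₀, hb⟩ := exists_le_ite_of_eventually_nonpos hdrift
    exact ⟨b, x₀, fun x => by linarith [hb x]⟩
  filter_upwards [eventually_ge_atTop 1,
    eventually_mul_rpow_neg_le_mul_rpow hκ hcκ hlam (mul_pos hε hlam)] with x hx hfar
  have hX : (0 : ℝ) < (x : ℝ) + 1 := by positivity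
  rw [tsum_mul_eq_of_support_subset_pair (by omega) (hPoff x hx), hPx0 x hx, hPxx x hx, hθ x]
  simp only [V, Nat.cast_zero, zero_add, one_rpow, mul_one,
    rpow_one_add_mul_rpow_div hX.le lam (by linarith : 1 + ε ≠ 0)]
  linear_combination hfar - κ * rpow_neg_mul_rpow_one_add_mul hX lam ε
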